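/- arXiv:1803.04346 — 2 statements merged into one kernel-verified Lean document; each statement's English description precedes it below -/
import Mathlib

section
/- The source term discretization s_i = p_i·(exp((φ(x_i) - φ(x_i + Δx))/(2θ_i)) - exp((φ(x_i) - φ(x_i - Δx))/(2θ_i)))/Δx satisfies s_i = -(p_i/θ_i)·φ'(x_i) + O(Δx²) as Δx → 0, for φ three times continuously differentiable and θ_i > 0. -/
/-!
With `G y = exp ((φ xᵢ - φ y) / (2θᵢ))` the scheme reads `sᵢ = 2pᵢ · (G (xᵢ + Δx) - G (xᵢ - Δx)) / (2Δx)`,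
a central difference quotient of `G`, while `G' xᵢ = -φ' xᵢ / (2θᵢ)`. Central differences of a `C³`
function are second order accurate: in the third-order Taylor expansions at `x ± h` the even-order
terms cancel, leaving `2h f' x + O(h³)`.
-/

open Asymptotics Filter Topology

variable {E : Type*} [NormedAddCommGroup E]

theorem exists_pos_bound_of_isBigO_nhdsGT_zero {u : ℝ → E} {n : ℕ}
    (hu : u =O[𝓝[>] 0] fun h => h ^ n) :
    ∃ C > 0, ∃ δ > 0, ∀ h, 0 < h → h < δ → ‖u h‖ ≤ C * h ^ n := by
  obtain ⟨C, hC, hCu⟩ := hu.exists_pos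
  obtain ⟨δ, hδ, hδu⟩ := (nhdsGT_basis (0 : ℝ)).eventually_iff.mp hCu.bound
  refine ⟨C, hC, δ, hδ, fun h h0 hδ => ?_⟩
  simpa [abs_of_pos h0] using hδu ⟨h0, hδ⟩

variable [NormedSpace ℝ E]

theorem taylorWithinEval_three_central_difference (f : ℝ → E) (s : Set ℝ) (x h : ℝ) :
    taylorWithinEval f 3 s x (x + h) - taylorWithinEval f 3 s x (x - h) =
      (2 * h) • iteratedDerivWithin 1 f s x + (h ^ 3 / 3) • iteratedDerivWithin 3 f s x := by
  simp only [taylor_within_apply, Finset.sum_range_succ, Finset.sum_range_zero]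
  norm_num [Nat.factorial]
  module

theorem isBigO_central_difference_sub_deriv {f : ℝ → E} (hf : ContDiff ℝ 3 f) (x : ℝ) :
    (fun h => f (x + h) - f (x - h) - (2 * h) • deriv f x) =O[𝓝 0] fun h => h ^ 3 := by
  set R := fun y => f y - taylorWithinEval f 3 Set.univ x y
  have hR : R =o[𝓝 x] fun y => (y - x) ^ 3 := taylor_isLittleO_univ hf
  have hR_add : (fun h => R (x + h)) =o[𝓝 0] fun h => h ^ 3 := by
    simpa [Function.comp_def] using
      hR.comp_tendsto ((continuous_const_add x).tendsto' 0 x (add_zero x))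
  have hR_sub : (fun h => R (x - h)) =o[𝓝 0] fun h => h ^ 3 := by
    simpa [Function.comp_def, Odd.neg_pow (by decide : Odd 3), isLittleO_neg_right] using
      hR.comp_tendsto ((continuous_sub_left x).tendsto' 0 x (sub_zero x))
  have hcubic : (fun h : ℝ => (h ^ 3 / 3) • iteratedDeriv 3 f x) =O[𝓝 0] fun h => h ^ 3 := by
    refine ((isBigO_refl (fun h : ℝ => h ^ 3) _).smul
      (isBigO_const_one ℝ ((3 : ℝ)⁻¹ • iteratedDeriv 3 f x) _)).congr (fun h => ?_) (fun h => ?_)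
    · module
    · simp
  refine ((hR_add.sub hR_sub).isBigO.add hcubic).congr_left fun h => ?_
  have hT := taylorWithinEval_three_central_difference f Set.univ x h
  simp only [iteratedDerivWithin_univ, iteratedDeriv_one] at hT
  linear_combination (norm := module) -hT

theorem isBigO_central_difference_quotient_sub_deriv {f : ℝ → E} (hf : ContDiff ℝ 3 f) (x : ℝ) :
    (fun h => (2 * h)⁻¹ • (f (x + h) - f (x - h)) - deriv f x) =O[𝓝[≠] 0] fun h => h ^ 2 := by
  refine (((isBigO_refl (fun h : ℝ => h⁻¹) _).smul
    ((isBigO_central_difference_sub_deriv hf x).mono nhdsWithin_le_nhds)).const_smul_left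
      (2⁻¹ : ℝ)).congr' ?_ ?_ <;>
    filter_upwards [self_mem_nhdsWithin] with h (hh : h ≠ 0)
  · simp only [Pi.smul_apply, smul_sub, smul_smul]
    rw [show (2⁻¹ : ℝ) * (h⁻¹ * (2 * h)) = 1 by field_simp, one_smul, mul_inv]
  · rw [smul_eq_mul]
    field_simp

theorem source_term_second_order_general
    (φ : ℝ → ℝ) (xi pi θi : ℝ)
    (hφ : ContDiff ℝ 3 φ) :
    ∃ C > 0, ∃ δ > 0, ∀ Δx : ℝ, 0 < Δx → Δx < δ →
      |pi * (Real.exp ((φ xi - φ (xi + Δx)) / (2 * θi)) -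
             Real.exp ((φ xi - φ (xi - Δx)) / (2 * θi))) / Δx
        + pi / θi * deriv φ xi| ≤ C * Δx ^ 2 := by
  set G : ℝ → ℝ := fun y => Real.exp ((φ xi - φ y) / (2 * θi))
  have hG : ContDiff ℝ 3 G := by fun_prop
  have hG' : deriv G xi = -deriv φ xi / (2 * θi) := by
    simpa using (((hasDerivAt_const xi (φ xi)).sub
      (hφ.differentiable (by norm_num) xi).hasDerivAt).div_const (2 * θi)).exp.deriv
  obtain ⟨C, hC, δ, hδ, hbound⟩ := exists_pos_bound_of_isBigO_nhdsGT_zero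
    (((isBigO_central_difference_quotient_sub_deriv hG xi).mono
      (nhdsWithin_mono _ fun h (h0 : 0 < h) => h0.ne')).const_mul_left (2 * pi))
  refine ⟨C, hC, δ, hδ, fun Δx h0 hΔ => (le_of_eq ?_).trans (hbound Δx h0 hΔ)⟩
  rw [Real.norm_eq_abs, smul_eq_mul, hG']
  congr 1
  simp only [G]
  ring

/-- The well-balanced source term discretization is a second order accurate
approximation of `-(pᵢ/θᵢ) φ'(xᵢ)`. -/
theorem source_term_second_order
    (φ : ℝ → ℝ) (xi pi θi : ℝ) (hθ : 0 < θi)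
    (hφ : ContDiff ℝ 3 φ) :
    ∃ C > 0, ∃ δ > 0, ∀ Δx : ℝ, 0 < Δx → Δx < δ →
      |pi * (Real.exp ((φ xi - φ (xi + Δx)) / (2 * θi)) -
             Real.exp ((φ xi - φ (xi - Δx)) / (2 * θi))) / Δx
        + pi / θi * deriv φ xi| ≤ C * Δx ^ 2 :=
  source_term_second_order_general φ xi pi θi hφ
end

section
/- Let T₀ > 0, R > 0, and let φ_i = φ(x_i) for grid points x_i with uniform spacing. Define p_i = p₀·exp(-φ_i/(R·T₀)) (the exact isothermal hydrostatic pressure at grid points) and ψ_i - ψ_{i+1} = (φ_{i+1} - φ_i)/(R·T₀). Then p_{i+1}·exp(-ψ_{i+1}) = p_i·exp(-ψ_i) for all i, i.e., the discrete well-balance condition p_i·exp(-ψ_i) = const holds exactly. -/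
/-! In the isothermal case `pᵢ e^{-ψᵢ} = p₀ e^{-(φᵢ/(R T₀) + ψᵢ)}`, and the discrete relation
defining `ψ` says exactly that the exponent `φᵢ/(R T₀) + ψᵢ` does not change from `i` to `i + 1`. -/

theorem div_add_eq_of_sub_eq_div_sub {K : Type*} [Field K] {φ ψ : ℤ → K} {c : K}
    (h : ∀ i, ψ i - ψ (i + 1) = (φ (i + 1) - φ i) / c) (i : ℤ) :
    φ (i + 1) / c + ψ (i + 1) = φ i / c + ψ i := by
  linear_combination -h i

theorem mul_exp_neg_div_mul_exp_neg (p₀ c a b : ℝ) :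
    p₀ * Real.exp (-a / c) * Real.exp (-b) = p₀ * Real.exp (-(a / c + b)) := by
  rw [mul_assoc, ← Real.exp_add, neg_div, neg_add]

theorem isothermal_discrete_well_balance_general
    (R T₀ p₀ : ℝ)
    (φ ψ p : ℤ → ℝ)
    (hp : ∀ i, p i = p₀ * Real.exp (-φ i / (R * T₀)))
    (hψ : ∀ i, ψ i - ψ (i + 1) = (φ (i + 1) - φ i) / (R * T₀)) :
    ∀ i : ℤ, p (i + 1) * Real.exp (-ψ (i + 1)) = p i * Real.exp (-ψ i) := by
  intro i
  rw [hp, hp, mul_exp_neg_div_mul_exp_neg, mul_exp_neg_div_mul_exp_neg,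
    div_add_eq_of_sub_eq_div_sub hψ i]

/-- For the isothermal ideal gas, the interpolated exact hydrostatic pressure
satisfies the discrete well-balance condition `pᵢ e^{-ψᵢ} = const`. -/
theorem isothermal_discrete_well_balance
    (R T₀ p₀ : ℝ) (hR : 0 < R) (hT₀ : 0 < T₀)
    (φ ψ p : ℤ → ℝ)
    (hp : ∀ i, p i = p₀ * Real.exp (-φ i / (R * T₀)))
    (hψ : ∀ i, ψ i - ψ (i + 1) = (φ (i + 1) - φ i) / (R * T₀)) :
    ∀ i : ℤ, p (i + 1) * Real.exp (-ψ (i + 1)) = p i * Real.exp (-ψ i) :=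
  isothermal_discrete_well_balance_general R T₀ p₀ φ ψ p hp hψ
end
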